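/- Mean fixed-budget lower bound: Fix s2 ≤ |I2| and s3 ≤ |I3| with |I1| + |I2| − s2 + s3 > 0. For any S2 ⊆ I2 with |I2\S2| = s2, any S3 ⊆ I3 with |S3| = s3, and any l ≤ x ≤ u, the mean of x over I1 ∪ S2 ∪ S3 is at least ( Σ_{i∈I1} l(i) + (sum of the (|I2| − s2) smallest lower bounds in I2) + (sum of the s3 smallest lower bounds in I3) ) / (|I1| + |I2| − s2 + s3); and this bound is tight. -/

import Mathlib

/-!
Pointwise `l ≤ x`, so it suffices to bound sums of `l`. If `S ⊆ J`, the sorted list of the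
values of `l` on `S` is a sublist of the sorted list of its values on `J`, and in a sorted list
the prefix of a given length has the least sum among all sublists of that length; hence
`botSum J l #S ≤ ∑ i ∈ S, l i`. Equality is attained by `x = l` together with the first indices
of `J` sorted by `l`.
-/

noncomputable def kthLargest (Y : Multiset ℝ) (i : ℕ) : ℝ :=
  ((Y.sort (· ≤ ·)).reverse).getD (i - 1) 0

noncomputable def kthSmallest (Y : Multiset ℝ) (i : ℕ) : ℝ :=
  (Y.sort (· ≤ ·)).getD (i - 1) 0

/-- Mean of `x` over a finset (equal to `0` on the empty set, since `x/0 = 0` in `ℝ`). -/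
noncomputable def meanF {ι : Type*} (S : Finset ι) (x : ι → ℝ) : ℝ :=
  (∑ i ∈ S, x i) / S.card

/-- Sum of the `k` largest values of `u` over `J`. -/
noncomputable def topSum {ι : Type*} (J : Finset ι) (u : ι → ℝ) (k : ℕ) : ℝ :=
  ∑ i ∈ Finset.range k, kthLargest (J.val.map u) (i + 1)

/-- Sum of the `k` smallest values of `l` over `J`. -/
noncomputable def botSum {ι : Type*} (J : Finset ι) (l : ι → ℝ) (k : ℕ) : ℝ :=
  ∑ i ∈ Finset.range k, kthSmallest (J.val.map l) (i + 1)

open Finset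

namespace List

theorem sum_take_eq_sum_range_getD {M : Type*} [AddCommMonoid M] (L : List M) (k : ℕ) :
    (L.take k).sum = ∑ i ∈ Finset.range k, L.getD i 0 := by
  induction k with
  | zero => simp
  | succ k ih =>
    rw [take_add_one, sum_append, ih, Finset.sum_range_succ, getD_eq_getElem?_getD]
    cases L[k]? <;> simp

variable {α : Type*} [AddCommMonoid α] [PartialOrder α] [IsOrderedAddMonoid α]

theorem sum_take_cons_le_sum_take {a : α} {L : List α} (ha : ∀ b ∈ L, a ≤ b) {n : ℕ}
    (hn : n ≤ L.length) : ((a :: L).take n).sum ≤ (L.take n).sum := by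
  cases n with
  | zero => simp
  | succ n =>
    rw [take_succ_cons, sum_cons, sum_take_succ L n hn, add_comm]
    exact add_le_add_right (ha _ (getElem_mem _)) _

theorem Sublist.sum_take_length_le {L₁ L₂ : List α} (h : L₁ <+ L₂)
    (hL₂ : L₂.Pairwise (· ≤ ·)) : (L₂.take L₁.length).sum ≤ L₁.sum := by
  induction h with
  | slnil => simp
  | @cons L₁ L₂ a h ih =>
    exact (sum_take_cons_le_sum_take (fun _ hb => rel_of_pairwise_cons hL₂ hb) h.length_le).trans
      (ih hL₂.of_cons)
  | @cons_cons L₁ L₂ a h ih =>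
    simpa using add_le_add_right (ih hL₂.of_cons) a

end List

section

variable {ι : Type*}

theorem botSum_eq_sum_take (J : Finset ι) (l : ι → ℝ) (k : ℕ) :
    botSum J l k = (((J.val.map l).sort (· ≤ ·)).take k).sum := by
  simp [botSum, kthSmallest, List.sum_take_eq_sum_range_getD]

theorem botSum_card_le_sum {J S : Finset ι} (l : ι → ℝ) (hS : S ⊆ J) :
    botSum J l #S ≤ ∑ i ∈ S, l i := by
  have hsub : ((S.val.map l).sort (· ≤ ·)).Sublist ((J.val.map l).sort (· ≤ ·)) := by
    refine List.sublist_of_subperm_of_pairwise ?_ (Multiset.pairwise_sort _ _)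
      (Multiset.pairwise_sort _ _)
    rw [← Multiset.coe_le, Multiset.sort_eq, Multiset.sort_eq]
    exact Multiset.map_le_map (val_le_iff.2 hS)
  calc botSum J l #S = (((J.val.map l).sort (· ≤ ·)).take #S).sum := botSum_eq_sum_take ..
    _ ≤ ((S.val.map l).sort (· ≤ ·)).sum := by
      simpa using hsub.sum_take_length_le (Multiset.pairwise_sort _ _)
    _ = ∑ i ∈ S, l i := by rw [← Multiset.sum_coe, Multiset.sort_eq]; rfl

theorem exists_subset_card_eq_sum_eq_botSum (J : Finset ι) (l : ι → ℝ) {k : ℕ}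
    (hk : k ≤ #J) : ∃ S ⊆ J, #S = k ∧ ∑ i ∈ S, l i = botSum J l k := by
  classical
  set L := J.toList.mergeSort (fun a b => l a ≤ l b)
  have hperm : L.Perm J.toList := List.mergeSort_perm _ _
  have hnodup : L.Nodup := hperm.nodup_iff.2 J.nodup_toList
  have hsorted : L.map l = (J.val.map l).sort (· ≤ ·) := by
    rw [List.map_mergeSort (s := fun a b => a ≤ b) (by simp), ← Multiset.coe_sort,
      ← Multiset.map_coe, coe_toList]
  refine ⟨(L.take k).toFinset, ?_, ?_, ?_⟩
  · intro i hi
    simpa using hperm.subset (List.mem_of_mem_take (List.mem_toFinset.1 hi))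
  · rw [List.toFinset_card_of_nodup (hnodup.sublist (List.take_sublist _ _)), List.length_take,
      hperm.length_eq, length_toList]
    omega
  · rw [botSum_eq_sum_take, ← hsorted, ← List.map_take,
      List.sum_toFinset _ (hnodup.sublist (List.take_sublist _ _))]

theorem meanF_union_union [DecidableEq ι] {A B C : Finset ι} (hAB : Disjoint A B)
    (hAC : Disjoint A C) (hBC : Disjoint B C) (x : ι → ℝ) :
    meanF (A ∪ B ∪ C) x = (∑ i ∈ A, x i + ∑ i ∈ B, x i + ∑ i ∈ C, x i) / (#A + #B + #C : ℕ) := by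
  have hABC : Disjoint (A ∪ B) C := disjoint_union_left.2 ⟨hAC, hBC⟩
  rw [meanF, sum_union hABC, sum_union hAB, card_union_of_disjoint hABC,
    card_union_of_disjoint hAB]

end

theorem stmt9_general {ι : Type*} [DecidableEq ι] (I1 I2 I3 : Finset ι)
    (h12 : Disjoint I1 I2) (h13 : Disjoint I1 I3) (h23 : Disjoint I2 I3)
    (l u : ι → ℝ) (hlu : ∀ i ∈ I1 ∪ I2 ∪ I3, l i ≤ u i)
    (s2 s3 : ℕ) (hs2 : s2 ≤ I2.card) (hs3 : s3 ≤ I3.card) :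
    (∀ S2 ⊆ I2, ∀ S3 ⊆ I3, (I2 \ S2).card = s2 → S3.card = s3 →
      ∀ x : ι → ℝ, (∀ i ∈ I1 ∪ I2 ∪ I3, l i ≤ x i ∧ x i ≤ u i) →
        ((∑ i ∈ I1, l i) + botSum I2 l (I2.card - s2) + botSum I3 l s3) /
            ((I1.card + I2.card - s2 + s3 : ℕ) : ℝ) ≤ meanF (I1 ∪ S2 ∪ S3) x) ∧
    (∃ S2 ⊆ I2, ∃ S3 ⊆ I3, (I2 \ S2).card = s2 ∧ S3.card = s3 ∧
      ∃ x : ι → ℝ, (∀ i ∈ I1 ∪ I2 ∪ I3, l i ≤ x i ∧ x i ≤ u i) ∧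
        meanF (I1 ∪ S2 ∪ S3) x =
          ((∑ i ∈ I1, l i) + botSum I2 l (I2.card - s2) + botSum I3 l s3) /
            ((I1.card + I2.card - s2 + s3 : ℕ) : ℝ)) := by
  constructor
  · intro S2 hS2 S3 hS3 hc2 hc3 x hx
    have hS2card : #S2 = #I2 - s2 := by
      have := card_sdiff_of_subset hS2
      have := card_le_card hS2
      omega
    have hl (S : Finset ι) (hS : S ⊆ I1 ∪ I2 ∪ I3) : ∑ i ∈ S, l i ≤ ∑ i ∈ S, x i :=
      sum_le_sum fun i hi => (hx i (hS hi)).1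
    rw [meanF_union_union (h12.mono_right hS2) (h13.mono_right hS3) (h23.mono hS2 hS3),
      hS2card, hc3, ← Nat.add_sub_assoc hs2]
    gcongr ?_ / _
    gcongr ?_ + ?_ + ?_
    · exact hl I1 (by grind)
    · exact hS2card ▸ (botSum_card_le_sum l hS2).trans (hl S2 (by grind))
    · exact hc3 ▸ (botSum_card_le_sum l hS3).trans (hl S3 (by grind))
  · obtain ⟨S2, hS2, hc2, hsum2⟩ := exists_subset_card_eq_sum_eq_botSum I2 l (Nat.sub_le #I2 s2)
    obtain ⟨S3, hS3, hc3, hsum3⟩ := exists_subset_card_eq_sum_eq_botSum I3 l hs3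
    refine ⟨S2, hS2, S3, hS3, by rw [card_sdiff_of_subset hS2, hc2]; omega, hc3, l,
      fun i hi => ⟨le_rfl, hlu i hi⟩, ?_⟩
    rw [meanF_union_union (h12.mono_right hS2) (h13.mono_right hS3) (h23.mono hS2 hS3),
      hsum2, hsum3, hc2, hc3, Nat.add_sub_assoc hs2]

/-- Mean fixed-budget lower bound, with tightness. -/
theorem stmt9 {ι : Type*} [DecidableEq ι] (I1 I2 I3 : Finset ι)
    (h12 : Disjoint I1 I2) (h13 : Disjoint I1 I3) (h23 : Disjoint I2 I3)
    (l u : ι → ℝ) (hlu : ∀ i ∈ I1 ∪ I2 ∪ I3, l i ≤ u i)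
    (s2 s3 : ℕ) (hs2 : s2 ≤ I2.card) (hs3 : s3 ≤ I3.card)
    (hpos : 0 < I1.card + I2.card - s2 + s3) :
    (∀ S2 ⊆ I2, ∀ S3 ⊆ I3, (I2 \ S2).card = s2 → S3.card = s3 →
      ∀ x : ι → ℝ, (∀ i ∈ I1 ∪ I2 ∪ I3, l i ≤ x i ∧ x i ≤ u i) →
        ((∑ i ∈ I1, l i) + botSum I2 l (I2.card - s2) + botSum I3 l s3) /
            ((I1.card + I2.card - s2 + s3 : ℕ) : ℝ) ≤ meanF (I1 ∪ S2 ∪ S3) x) ∧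
    (∃ S2 ⊆ I2, ∃ S3 ⊆ I3, (I2 \ S2).card = s2 ∧ S3.card = s3 ∧
      ∃ x : ι → ℝ, (∀ i ∈ I1 ∪ I2 ∪ I3, l i ≤ x i ∧ x i ≤ u i) ∧
        meanF (I1 ∪ S2 ∪ S3) x =
          ((∑ i ∈ I1, l i) + botSum I2 l (I2.card - s2) + botSum I3 l s3) /
            ((I1.card + I2.card - s2 + s3 : ℕ) : ℝ)) :=
  stmt9_general I1 I2 I3 h12 h13 h23 l u hlu s2 s3 hs2 hs3
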